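/- Let (u_n) be a sequence of square-integrable functions ℝ² → ℝ converging pointwise almost everywhere to a square-integrable function u : ℝ² → ℝ with ∫_{ℝ²} u² dx > 0. Let (v_n) be a sequence of square-integrable functions ℝ² → ℝ such that sup_n ∫_{ℝ²} v_n² dx < ∞ and sup_n ∬_{ℝ²×ℝ²} log(1+‖x−y‖)·u_n(x)²v_n(y)² dxdy < ∞. If moreover ∬_{ℝ²×ℝ²} log(1+‖x−y‖)·u_n(x)²v_n(y)² dxdy → 0 and ∫_{ℝ²} v_n² dx → 0 as n → ∞, then ∫_{ℝ²} log(1+‖x‖)·v_n(x)² dx → 0 as n → ∞. -/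

import Mathlib

/-!
Since `uₙ → u₀` a.e. and `u₀` does not vanish on a set of positive measure, there are a bounded
measurable set `T ⊆ closedBall 0 R` with `0 < |T| < ∞` and `m > 0` such that `m ≤ uₙ²` on `T` for
all large `n`. For `x ∈ T`, `log (1 + ‖y‖) ≤ log (1 + R) + log (1 + ‖x - y‖)`; integrating this
against `vₙ(y)² dy` and then against `uₙ(x)² dx` over `T` gives
`m |T| ∫ log (1 + ‖y‖) vₙ² ≤ m |T| log (1 + R) ∫ vₙ² + ∬ log (1 + ‖x - y‖) uₙ(x)² vₙ(y)²`,
and both terms on the right tend to zero.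
-/

open MeasureTheory Filter

abbrev E2 := EuclideanSpace ℝ (Fin 2)

open Metric
open scoped ENNReal Topology

lemma Real.log_one_add_norm_le {E : Type*} [SeminormedAddCommGroup E] {x : E} {R : ℝ}
    (hx : ‖x‖ ≤ R) (y : E) :
    Real.log (1 + ‖y‖) ≤ Real.log (1 + R) + Real.log (1 + ‖x - y‖) := by
  have hR : 0 ≤ R := (norm_nonneg x).trans hx
  rw [← Real.log_mul (by positivity) (by positivity)]
  refine Real.log_le_log (by positivity) ?_
  nlinarith [norm_le_norm_add_norm_sub' y x, norm_sub_rev x y, norm_nonneg (x - y)]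

lemma ENNReal.tendsto_nhds_zero_of_mul_le_mul_add {ι : Type*} {l : Filter ι}
    {W X Y : ι → ℝ≥0∞} {b : ℝ≥0∞} (hb₀ : b ≠ 0) (hb : b ≠ ∞)
    (hX : Tendsto X l (𝓝 0)) (hY : Tendsto Y l (𝓝 0)) (h : ∀ᶠ i in l, b * W i ≤ b * X i + Y i) :
    Tendsto W l (𝓝 0) := by
  have hbW : Tendsto (fun i => b * W i) l (𝓝 0) :=
    tendsto_of_tendsto_of_tendsto_of_le_of_le' tendsto_const_nhds
      (by simpa using (ENNReal.Tendsto.const_mul hX (Or.inr hb)).add hY)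
      (Eventually.of_forall fun _ => zero_le) h
  simpa [← mul_assoc, ENNReal.inv_mul_cancel hb₀ hb] using
    ENNReal.Tendsto.const_mul hbW (Or.inr (ENNReal.inv_ne_top.2 hb₀))

section

variable {E : Type*} [SeminormedAddCommGroup E] [MeasurableSpace E] {μ : Measure E}

lemma exists_measure_closedBall_inter_forall_ge_pos {u : ℕ → E → ℝ} {g : E → ℝ}
    (hg : 0 < μ {x | g x ≠ 0}) (hlim : ∀ᵐ x ∂μ, Tendsto (u · x) atTop (𝓝 (g x))) :
    ∃ k : ℕ, 0 < μ (closedBall 0 k ∩ {x | ∀ n ≥ k, ((k : ℝ) + 1)⁻¹ ≤ |u n x|}) := by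
  by_contra! h
  refine hg.ne' <| measure_mono_null_ae ?_ <|
    measure_iUnion_null fun k => nonpos_iff_eq_zero.1 (h k)
  filter_upwards [hlim] with x hx (hx₀ : g x ≠ 0)
  have hgx : 0 < |g x| := abs_pos.2 hx₀
  obtain ⟨N, hN⟩ := eventually_atTop.1 <| hx.abs.eventually (lt_mem_nhds (half_lt_self hgx))
  obtain ⟨k, hk⟩ := exists_nat_ge (max (max (N : ℝ) ‖x‖) (2 / |g x|))
  simp only [max_le_iff, Nat.cast_le] at hk
  obtain ⟨⟨hNk, hxk⟩, hgk⟩ := hk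
  have hinv : ((k : ℝ) + 1)⁻¹ ≤ |g x| / 2 := by
    rw [inv_le_comm₀ (by positivity) (by positivity), inv_div]
    linarith
  exact Set.mem_iUnion.2
    ⟨k, mem_closedBall_zero_iff.2 hxk, fun n hn => hinv.trans (hN n (hNk.trans hn)).le⟩

lemma exists_measurableSet_measure_pos_forall_ge_le_sq [ProperSpace E] [OpensMeasurableSpace E]
    [IsFiniteMeasureOnCompacts μ] {u : ℕ → E → ℝ} {g : E → ℝ}
    (hu : ∀ n, AEStronglyMeasurable (u n) μ) (hg : 0 < μ {x | g x ≠ 0})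
    (hlim : ∀ᵐ x ∂μ, Tendsto (u · x) atTop (𝓝 (g x))) :
    ∃ (T : Set E) (R m : ℝ) (N : ℕ), MeasurableSet T ∧ T ⊆ closedBall 0 R ∧ 0 < μ T ∧
      μ T < ∞ ∧ 0 < m ∧ ∀ n ≥ N, ∀ᵐ x ∂μ.restrict T, m ≤ u n x ^ 2 := by
  set w : ℕ → E → ℝ := fun n => (hu n).mk (u n)
  have hlim' : ∀ᵐ x ∂μ, Tendsto (w · x) atTop (𝓝 (g x)) := by
    filter_upwards [hlim, ae_all_iff.2 fun n => (hu n).ae_eq_mk] with x hx hw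
    exact hx.congr hw
  obtain ⟨k, hk⟩ := exists_measure_closedBall_inter_forall_ge_pos hg hlim'
  set T := closedBall (0 : E) k ∩ {x | ∀ n ≥ k, ((k : ℝ) + 1)⁻¹ ≤ |w n x|}
  have hT : MeasurableSet T := by
    simp only [T, Set.ofPred_forall]
    exact measurableSet_closedBall.inter <| .iInter fun n => .iInter fun _ =>
      measurableSet_le measurable_const (hu n).stronglyMeasurable_mk.measurable.abs
  refine ⟨T, k, ((k : ℝ) + 1)⁻¹ ^ 2, k, hT, Set.inter_subset_left, hk,
    (measure_mono Set.inter_subset_left).trans_lt measure_closedBall_lt_top, by positivity,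
    fun n hn => ?_⟩
  filter_upwards [ae_restrict_of_ae (hu n).ae_eq_mk, ae_restrict_mem hT] with x hx hxT
  rw [hx]
  exact (pow_le_pow_left₀ (by positivity) (hxT.2 n hn) 2).trans_eq (sq_abs _)

lemma lintegral_log_one_add_norm_mul_sq_le {v : E → ℝ} (hv : AEMeasurable v μ) {x : E} {R : ℝ}
    (hx : ‖x‖ ≤ R) :
    ∫⁻ y, ENNReal.ofReal (Real.log (1 + ‖y‖) * v y ^ 2) ∂μ ≤
      ENNReal.ofReal (Real.log (1 + R)) * ∫⁻ y, ENNReal.ofReal (v y ^ 2) ∂μ +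
        ∫⁻ y, ENNReal.ofReal (Real.log (1 + ‖x - y‖) * v y ^ 2) ∂μ := by
  have hR : 0 ≤ Real.log (1 + R) := Real.log_nonneg (by linarith [(norm_nonneg x).trans hx])
  rw [← lintegral_const_mul' _ _ ENNReal.ofReal_ne_top, ← lintegral_add_left' (by fun_prop)]
  refine lintegral_mono fun y => ?_
  have hxy : 0 ≤ Real.log (1 + ‖x - y‖) := Real.log_nonneg (by linarith [norm_nonneg (x - y)])
  rw [← ENNReal.ofReal_mul hR,
    ← ENNReal.ofReal_add (by positivity) (mul_nonneg hxy (sq_nonneg _)), ← add_mul]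
  exact ENNReal.ofReal_le_ofReal
    (mul_le_mul_of_nonneg_right (Real.log_one_add_norm_le hx y) (sq_nonneg _))

lemma ofReal_mul_measure_mul_lintegral_log_one_add_norm_le [OpensMeasurableSpace E]
    [MeasurableSub₂ E] [SFinite μ] {u v : E → ℝ} (hu : AEMeasurable u μ) (hv : AEMeasurable v μ)
    {T : Set E} (hT : MeasurableSet T) {R m : ℝ} (hTR : T ⊆ closedBall 0 R)
    (hm : ∀ᵐ x ∂μ.restrict T, m ≤ u x ^ 2) :
    ENNReal.ofReal m * μ T * ∫⁻ y, ENNReal.ofReal (Real.log (1 + ‖y‖) * v y ^ 2) ∂μ ≤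
      ENNReal.ofReal m * μ T *
          (ENNReal.ofReal (Real.log (1 + R)) * ∫⁻ y, ENNReal.ofReal (v y ^ 2) ∂μ) +
        ∫⁻ z, ENNReal.ofReal (Real.log (1 + ‖z.1 - z.2‖) * u z.1 ^ 2 * v z.2 ^ 2) ∂μ.prod μ := by
  set C := ENNReal.ofReal (Real.log (1 + R)) * ∫⁻ y, ENNReal.ofReal (v y ^ 2) ∂μ
  set I : E → ℝ≥0∞ := fun x => ∫⁻ y, ENNReal.ofReal (Real.log (1 + ‖x - y‖) * v y ^ 2) ∂μ
  calc ENNReal.ofReal m * μ T * ∫⁻ y, ENNReal.ofReal (Real.log (1 + ‖y‖) * v y ^ 2) ∂μ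
      = ∫⁻ _ in T, ENNReal.ofReal m *
          ∫⁻ y, ENNReal.ofReal (Real.log (1 + ‖y‖) * v y ^ 2) ∂μ ∂μ := by
        rw [setLIntegral_const, mul_right_comm]
    _ ≤ ∫⁻ x in T, (ENNReal.ofReal m * C + ENNReal.ofReal m * I x) ∂μ := by
        refine setLIntegral_mono' hT fun x hx => ?_
        rw [← mul_add]
        gcongr
        exact lintegral_log_one_add_norm_mul_sq_le hv (mem_closedBall_zero_iff.1 (hTR hx))
    _ = ENNReal.ofReal m * μ T * C + ∫⁻ x in T, ENNReal.ofReal m * I x ∂μ := by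
        rw [lintegral_add_left measurable_const, setLIntegral_const, mul_right_comm]
    _ ≤ ENNReal.ofReal m * μ T * C + ∫⁻ x, ENNReal.ofReal (u x ^ 2) * I x ∂μ := by
        refine add_le_add le_rfl ((lintegral_mono_ae ?_).trans (setLIntegral_le_lintegral _ _))
        filter_upwards [hm] with x hx
        gcongr
    _ = _ := by
        rw [lintegral_prod _ (by fun_prop)]
        congr 1
        refine lintegral_congr fun x => ?_
        rw [← lintegral_const_mul' _ _ ENNReal.ofReal_ne_top]
        refine lintegral_congr fun y => ?_
        rw [← ENNReal.ofReal_mul (sq_nonneg _)]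
        ring_nf

end

theorem stmt3 (u : ℕ → E2 → ℝ) (u₀ : E2 → ℝ)
    (hu : ∀ n, MemLp (u n) 2 (volume : Measure E2))
    (hu₀pos : 0 < ∫ x : E2, (u₀ x) ^ 2)
    (hae : ∀ᵐ x : E2, Tendsto (fun n => u n x) atTop (nhds (u₀ x)))
    (v : ℕ → E2 → ℝ) (hv : ∀ n, MemLp (v n) 2 (volume : Measure E2))
    (hB0 : Tendsto (fun n => ∫⁻ z : E2 × E2,
        ENNReal.ofReal (Real.log (1 + ‖z.1 - z.2‖) * (u n z.1) ^ 2 * (v n z.2) ^ 2))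
      atTop (nhds 0))
    (hv0 : Tendsto (fun n => ∫ x : E2, (v n x) ^ 2) atTop (nhds 0)) :
    Tendsto (fun n => ∫⁻ x : E2, ENNReal.ofReal (Real.log (1 + ‖x‖) * (v n x) ^ 2))
      atTop (nhds 0) := by
  have hu₀ : 0 < volume {x : E2 | u₀ x ≠ 0} := by
    refine pos_iff_ne_zero.2 fun h => hu₀pos.ne' (integral_eq_zero_of_ae ?_)
    filter_upwards [measure_eq_zero_iff_ae_notMem.1 h] with x hx
    simp_all
  obtain ⟨T, R, m, N, hT, hTR, hTpos, hTfin, hm, hum⟩ :=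
    exists_measurableSet_measure_pos_forall_ge_le_sq (fun n => (hu n).1) hu₀ hae
  have hV : Tendsto (fun n => ∫⁻ x : E2, ENNReal.ofReal (v n x ^ 2)) atTop (𝓝 0) := by
    simpa [← ofReal_integral_eq_lintegral_ofReal (hv _).integrable_sq
      (ae_of_all _ fun _ => sq_nonneg _)] using ENNReal.tendsto_ofReal hv0
  have hRV := ENNReal.Tendsto.const_mul hV
    (Or.inr (ENNReal.ofReal_ne_top (r := Real.log (1 + R))))
  rw [mul_zero] at hRV
  refine ENNReal.tendsto_nhds_zero_of_mul_le_mul_add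
    (mul_ne_zero (ENNReal.ofReal_pos.2 hm).ne' hTpos.ne')
    (ENNReal.mul_ne_top ENNReal.ofReal_ne_top hTfin.ne) hRV hB0 ?_
  filter_upwards [eventually_ge_atTop N] with n hn
  exact ofReal_mul_measure_mul_lintegral_log_one_add_norm_le (hu n).1.aemeasurable
    (hv n).1.aemeasurable hT hTR (hum n hn)
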